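/- For a positive integer n ≡ 1 (mod 4), the sum \sum_{i=1}^{(n-5)/4} \sum_{j=(n+3)/4}^{(n+1)/2-i} ( \sum_{k=i+1}^{(n-1)/2-j} \sum_{l=j+1}^{(n+1)/2-k} 1 + \sum_{k=i+1}^{j-1} \sum_{l=n-k+1}^{n} 1 ) equals (n+3)(n-1)(n-5)(11n+13)/6144. -/

import Mathlib

/-!
Write `n = 4m + 1`. The innermost sums are lengths of integer intervals, so each level of
the nested sum is a sum of a polynomial over an interval, evaluated by telescoping against an
explicit antiderivative built from products of consecutive integers
(`(t+1) t (t-1) - t (t-1) (t-2) = 3 t (t-1)`, and so on).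
-/

open Finset

theorem Finset.sum_Icc_eq_sub_of_sub_eq {M : Type*} [AddCommGroup M] (f F : ℤ → M)
    (hF : ∀ k, F k - F (k - 1) = f k) {a b : ℤ} (hab : a - 1 ≤ b) :
    ∑ k ∈ Icc a b, f k = F b - F (a - 1) := by
  induction b, hab using Int.leInduction with
  | base => simp
  | succ b hb ih =>
    rw [← insert_Icc_right_eq_Icc_add_one (by omega), sum_insert (by simp),
      ih, ← hF, add_sub_cancel_right]
    abel

theorem Int.sum_Icc_one {a b : ℤ} (hab : a ≤ b + 1) : ∑ _k ∈ Icc a b, (1 : ℤ) = b + 1 - a := by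
  simp only [sum_const, Int.card_Icc, nsmul_eq_mul, mul_one]
  omega

theorem Int.two_mul_sum_Icc_id {a b : ℤ} (hab : a - 1 ≤ b) :
    2 * ∑ k ∈ Icc a b, k = b * (b + 1) - (a - 1) * a := by
  rw [mul_sum, sum_Icc_eq_sub_of_sub_eq _ (fun k => k * (k + 1)) (fun k => by ring) hab]
  ring

theorem Int.two_mul_sum_Icc_sub {a b : ℤ} (hab : a ≤ b + 2) :
    2 * ∑ k ∈ Icc a b, (b + 1 - k) = (b + 1 - a) * (b + 2 - a) := by
  obtain rfl | hab : a = b + 2 ∨ a - 1 ≤ b := by omega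
  · simp
  rw [mul_sum,
    sum_Icc_eq_sub_of_sub_eq _ (fun k => -((b - k) * (b + 1 - k))) (fun k => by ring) hab]
  ring

/-- The `(i, j)` term of the double sum in the statement, for `n = 4m + 1`. -/
noncomputable def summand (m i j : ℤ) : ℤ :=
  (∑ k ∈ Icc (i + 1) (2 * m - j), ∑ _l ∈ Icc (j + 1) (2 * m + 1 - k), (1 : ℤ)) +
    ∑ k ∈ Icc (i + 1) (j - 1), ∑ _l ∈ Icc (4 * m + 1 - k + 1) (4 * m + 1), (1 : ℤ)

theorem two_mul_summand {m i j : ℤ} (hi : 0 ≤ i) (hij : i < j) (hj : j ≤ 2 * m + 1 - i) :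
    2 * summand m i j = (2 * m - i - j) * (2 * m + 1 - i - j) + j * (j - 1) - i * (i + 1) := by
  have hfirst : ∑ k ∈ Icc (i + 1) (2 * m - j), ∑ _l ∈ Icc (j + 1) (2 * m + 1 - k), (1 : ℤ) =
      ∑ k ∈ Icc (i + 1) (2 * m - j), (2 * m - j + 1 - k) :=
    sum_congr rfl fun k hk => by
      rw [Int.sum_Icc_one (by simp only [mem_Icc] at hk; omega)]; ring
  have hsecond : ∑ k ∈ Icc (i + 1) (j - 1), ∑ _l ∈ Icc (4 * m + 1 - k + 1) (4 * m + 1), (1 : ℤ) =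
      ∑ k ∈ Icc (i + 1) (j - 1), k :=
    sum_congr rfl fun k hk => by
      rw [Int.sum_Icc_one (by simp only [mem_Icc] at hk; omega)]; ring
  rw [summand, hfirst, hsecond, mul_add, Int.two_mul_sum_Icc_sub (by omega),
    Int.two_mul_sum_Icc_id (by omega)]
  ring

theorem six_mul_sum_summand {m i : ℤ} (hi : 0 ≤ i) (him : i ≤ m) :
    6 * ∑ j ∈ Icc (m + 1) (2 * m + 1 - i), summand m i j =
      (2 * m + 2 - i) * (2 * m + 1 - i) * (2 * m - i) - (m + 1) * m * (m - 1) +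
        (m - i + 1) * (m - i) * (m - i - 1) - 3 * i * (i + 1) * (m + 1 - i) := by
  have hterm : ∀ j ∈ Icc (m + 1) (2 * m + 1 - i), 6 * summand m i j =
      3 * ((2 * m - i - j) * (2 * m + 1 - i - j) + j * (j - 1) - i * (i + 1)) := by
    intro j hj
    simp only [mem_Icc] at hj
    rw [← two_mul_summand hi (by omega) hj.2]
    ring
  rw [mul_sum, sum_congr rfl hterm,
    sum_Icc_eq_sub_of_sub_eq _ (fun j => (j + 1) * j * (j - 1) -
      (2 * m - i - j + 1) * (2 * m - i - j) * (2 * m - i - j - 1) - 3 * i * (i + 1) * j)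
      (fun j => by ring) (by omega)]
  ring

theorem twentyFour_mul_sum_sum_summand {m : ℤ} (hm : 1 ≤ m) :
    24 * ∑ i ∈ Icc 1 (m - 1), ∑ j ∈ Icc (m + 1) (2 * m + 1 - i), summand m i j =
      (m - 1) * m * (m + 1) * (11 * m + 6) := by
  have hterm : ∀ i ∈ Icc 1 (m - 1), 24 * ∑ j ∈ Icc (m + 1) (2 * m + 1 - i), summand m i j =
      4 * ((2 * m + 2 - i) * (2 * m + 1 - i) * (2 * m - i) - (m + 1) * m * (m - 1) +
        (m - i + 1) * (m - i) * (m - i - 1) - 3 * i * (i + 1) * (m + 1 - i)) := by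
    intro i hi
    simp only [mem_Icc] at hi
    rw [← six_mul_sum_summand (by omega) (by omega)]
    ring
  rw [mul_sum, sum_congr rfl hterm,
    sum_Icc_eq_sub_of_sub_eq _ (fun i => -(2 * m - i + 2) * (2 * m - i + 1) * (2 * m - i) *
      (2 * m - i - 1) - 4 * (m + 1) * m * (m - 1) * i -
      (m - i + 1) * (m - i) * (m - i - 1) * (m - i - 2) - 4 * m * i * (i + 1) * (i + 2) +
      3 * (i - 1) * i * (i + 1) * (i + 2)) (fun i => by ring) (by omega)]
  ring

theorem stmt_19 (n : ℤ) (hn : 0 < n) (h4 : n % 4 = 1) :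
    (∑ i ∈ Finset.Icc 1 ((n-5)/4), ∑ j ∈ Finset.Icc ((n+3)/4) ((n+1)/2 - i),
      ((∑ k ∈ Finset.Icc (i+1) ((n-1)/2 - j), ∑ l ∈ Finset.Icc (j+1) ((n+1)/2 - k), (1:ℤ)) +
       (∑ k ∈ Finset.Icc (i+1) (j-1), ∑ l ∈ Finset.Icc (n-k+1) n, (1:ℤ))))
      = (n+3)*(n-1)*(n-5)*(11*n+13)/6144 := by
  obtain ⟨m, rfl⟩ : ∃ m, n = 4 * m + 1 := ⟨n / 4, by omega⟩
  rw [show (4 * m + 1 - 5) / 4 = m - 1 by omega, show (4 * m + 1 + 3) / 4 = m + 1 by omega,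
    show (4 * m + 1 + 1) / 2 = 2 * m + 1 by omega, show (4 * m + 1 - 1) / 2 = 2 * m by omega]
  change ∑ i ∈ Icc 1 (m - 1), ∑ j ∈ Icc (m + 1) (2 * m + 1 - i), summand m i j = _
  obtain rfl | hm : m = 0 ∨ 1 ≤ m := by omega
  · rfl
  rw [show (4 * m + 1 + 3) * (4 * m + 1 - 1) * (4 * m + 1 - 5) * (11 * (4 * m + 1) + 13) =
      6144 * ∑ i ∈ Icc 1 (m - 1), ∑ j ∈ Icc (m + 1) (2 * m + 1 - i), summand m i j by
    linear_combination -256 * twentyFour_mul_sum_sum_summand hm]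
  exact (Int.mul_ediv_cancel_left _ (by norm_num)).symm
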